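/- arXiv:2412.00906 — 2 statements merged into one kernel-verified Lean document; each statement's English description precedes it below -/
import Mathlib

section
/- (Loop unfold) For every valuation ε, guard expression e, pGCL program s, expectation lower bound p, and pDL state formula φ: ε ⊨ [if e {s; while e {s}} else {skip}]_p φ if and only if ε ⊨ [while e {s}]_p φ. -/
namespace PDL

/-- Program variables. -/
abbrev Var := String

/-- Values: integers or booleans. -/
inductive Value where
  | int : ℤ → Value
  | bool : Bool → Value
  deriving DecidableEq

/-- A valuation maps program variables to values. -/
abbrev Valuation := Var → Value

/-- pGCL statements (expressions are embedded shallowly as functions of the valuation). -/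
inductive Stmt : Type where
  | skip : Stmt
  | assign : Var → (Valuation → Value) → Stmt
  | seq : Stmt → Stmt → Stmt
  | demon : Stmt → Stmt → Stmt
  | prob : (Valuation → ℝ) → Stmt → Stmt → Stmt
  | ite : (Valuation → Bool) → Stmt → Stmt → Stmt
  | while : (Valuation → Bool) → Stmt → Stmt

/-- MDP states: a valuation together with the remaining program.  ⟨ε, skip⟩ is final. -/
abbrev State := Valuation × Stmt

/-- A (positional) policy resolves each demonic choice state to one of its branches
    (`true` = left branch, `false` = right branch). -/
abbrev Policy := State → Bool

/-- The probabilistic transition relation of the MDP semantics, under policy `π`. -/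
inductive Step (π : Policy) : State → ℝ → State → Prop where
  | assign {ε : Valuation} {x : Var} {e : Valuation → Value} :
      Step π (ε, .assign x e) 1 (Function.update ε x (e ε), .skip)
  | seqSkip {ε : Valuation} {s₂ : Stmt} {p : ℝ} {σ' : State} :
      Step π (ε, s₂) p σ' → Step π (ε, .seq .skip s₂) p σ'
  | seqStep {ε ε' : Valuation} {s₁ s₂ s' : Stmt} {p : ℝ} :
      Step π (ε, s₁) p (ε', s') → Step π (ε, .seq s₁ s₂) p (ε', .seq s' s₂)
  | demonL {ε : Valuation} {s₁ s₂ : Stmt} :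
      π (ε, .demon s₁ s₂) = true → Step π (ε, .demon s₁ s₂) 1 (ε, s₁)
  | demonR {ε : Valuation} {s₁ s₂ : Stmt} :
      π (ε, .demon s₁ s₂) = false → Step π (ε, .demon s₁ s₂) 1 (ε, s₂)
  | iteT {ε : Valuation} {e : Valuation → Bool} {s₁ s₂ : Stmt} :
      e ε = true → Step π (ε, .ite e s₁ s₂) 1 (ε, s₁)
  | iteF {ε : Valuation} {e : Valuation → Bool} {s₁ s₂ : Stmt} :
      e ε = false → Step π (ε, .ite e s₁ s₂) 1 (ε, s₂)
  | probL {ε : Valuation} {e : Valuation → ℝ} {s₁ s₂ : Stmt} :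
      0 ≤ e ε → e ε ≤ 1 → Step π (ε, .prob e s₁ s₂) (e ε) (ε, s₁)
  | probR {ε : Valuation} {e : Valuation → ℝ} {s₁ s₂ : Stmt} :
      0 ≤ e ε → e ε ≤ 1 → Step π (ε, .prob e s₁ s₂) (1 - e ε) (ε, s₂)
  | whileT {ε : Valuation} {e : Valuation → Bool} {s : Stmt} :
      e ε = true → Step π (ε, .while e s) 1 (ε, .seq s (.while e s))
  | whileF {ε : Valuation} {e : Valuation → Bool} {s : Stmt} :
      e ε = false → Step π (ε, .while e s) 1 (ε, .skip)

/-- Paths under policy `π` from a state to a final state `⟨ε, skip⟩`. -/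
inductive Paths (π : Policy) : State → Type where
  | nil (ε : Valuation) : Paths π (ε, .skip)
  | cons {σ σ' : State} (p : ℝ) (h : Step π σ p σ') (rest : Paths π σ') : Paths π σ

/-- The probability of a path: the product of its transition probabilities. -/
noncomputable def Paths.prob {π : Policy} : {σ : State} → Paths π σ → ℝ
  | _, .nil _ => 1
  | _, .cons p _ rest => p * rest.prob

/-- The final valuation of a path. -/
def Paths.finalVal {π : Policy} : {σ : State} → Paths π σ → Valuation
  | _, .nil ε => ε
  | _, .cons _ _ rest => rest.finalVal

/-- Expected value of reward `r` (on final valuations) from state `σ` under policy `π`: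
    the sum over all paths of the path probability times the reward at the final state. -/
noncomputable def expVal (π : Policy) (σ : State) (r : Valuation → ℝ) : ℝ :=
  ∑' ρ : Paths π σ, ρ.prob * r ρ.finalVal

/-- Expectation of reward `r` from state `σ`: the infimum over all policies of
    the expected value. -/
noncomputable def expectation (σ : State) (r : Valuation → ℝ) : ℝ :=
  ⨅ π : Policy, expVal π σ r

open Classical in
/-- The characteristic (indicator) function of a state formula. -/
noncomputable def char (φ : Valuation → Prop) : Valuation → ℝ :=
  fun ε => if φ ε then 1 else 0

/-- pDL box satisfaction: `ε ⊨ [s]_p φ` iff `p ε ≤ E_⟨ε,s⟩[[φ]]`. -/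
def sat (ε : Valuation) (s : Stmt) (p : Valuation → ℝ) (φ : Valuation → Prop) : Prop :=
  p ε ≤ expectation (ε, s) (char φ)

section Aux

variable {π : Policy}

/-- Inversion: from a deterministic state, every step has probability 1 and a unique target. -/
lemma step_ite_inv {ε : Valuation} {e : Valuation → Bool} {s₁ s₂ : Stmt} {p : ℝ} {σ' : State}
    (h : Step π (ε, .ite e s₁ s₂) p σ') :
    p = 1 ∧ σ' = (ε, if e ε then s₁ else s₂) := by
  cases h with
  | iteT he => simp [he]
  | iteF he => simp [he]

lemma step_while_inv {ε : Valuation} {e : Valuation → Bool} {s : Stmt} {p : ℝ} {σ' : State}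
    (h : Step π (ε, .while e s) p σ') :
    p = 1 ∧ σ' = (ε, if e ε then .seq s (.while e s) else .skip) := by
  cases h with
  | whileT he => simp [he]
  | whileF he => simp [he]

/-- Forward map for a deterministic one-step state. -/
def detFwd (τ : State) :
    {σ₀ : State} → (∀ p σ', Step π σ₀ p σ' → p = 1 ∧ σ' = τ) → σ₀.2 ≠ .skip →
      Paths π σ₀ → Paths π τ
  | _, _, hσ, .nil _ => absurd rfl hσ
  | _, huniq, _, .cons p h rest => (huniq p _ h).2 ▸ rest

lemma detFwd_prob (τ : State) {σ₀ : State}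
    (huniq : ∀ p σ', Step π σ₀ p σ' → p = 1 ∧ σ' = τ) (hσ : σ₀.2 ≠ .skip)
    (ρ : Paths π σ₀) : (detFwd τ huniq hσ ρ).prob = ρ.prob := by
  cases ρ with
  | nil ε => exact absurd rfl hσ
  | cons p h rest =>
    obtain ⟨h1, h2⟩ := huniq p _ h
    subst h1; subst h2
    simp [detFwd, Paths.prob]

lemma detFwd_finalVal (τ : State) {σ₀ : State}
    (huniq : ∀ p σ', Step π σ₀ p σ' → p = 1 ∧ σ' = τ) (hσ : σ₀.2 ≠ .skip)
    (ρ : Paths π σ₀) : (detFwd τ huniq hσ ρ).finalVal = ρ.finalVal := by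
  cases ρ with
  | nil ε => exact absurd rfl hσ
  | cons p h rest =>
    obtain ⟨h1, h2⟩ := huniq p _ h
    subst h1; subst h2
    simp [detFwd, Paths.finalVal]

/-- Paths from a deterministic one-step state are in bijection with paths from its target. -/
def detEquiv (τ : State) {σ₀ : State}
    (huniq : ∀ p σ', Step π σ₀ p σ' → p = 1 ∧ σ' = τ) (hσ : σ₀.2 ≠ .skip)
    (hstep : Step π σ₀ 1 τ) : Paths π σ₀ ≃ Paths π τ where
  toFun := detFwd τ huniq hσ
  invFun ρ := .cons 1 hstep ρ
  left_inv ρ := by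
    cases ρ with
    | nil ε => exact absurd rfl hσ
    | cons p h rest =>
      obtain ⟨h1, h2⟩ := huniq p _ h
      subst h1; subst h2
      rfl
  right_inv ρ := rfl

/-- Expected value is preserved by a deterministic probability-1 step. -/
lemma expVal_det (τ : State) {σ₀ : State}
    (huniq : ∀ p σ', Step π σ₀ p σ' → p = 1 ∧ σ' = τ) (hσ : σ₀.2 ≠ .skip)
    (hstep : Step π σ₀ 1 τ) (r : Valuation → ℝ) : expVal π σ₀ r = expVal π τ r := by
  unfold expVal
  rw [← (detEquiv τ huniq hσ hstep).tsum_eq (fun ρ => ρ.prob * r ρ.finalVal)]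
  exact tsum_congr fun ρ => by
    show ρ.prob * r ρ.finalVal = (detFwd τ huniq hσ ρ).prob * r (detFwd τ huniq hσ ρ).finalVal
    simp only [detEquiv, Equiv.coe_fn_mk, detFwd_prob, detFwd_finalVal]

end Aux

/-- (Loop unfold) `ε ⊨ [if e {s; while e {s}} else {skip}]_p φ` iff `ε ⊨ [while e {s}]_p φ`. -/
theorem pDL_loop_unfold (ε : Valuation) (e : Valuation → Bool) (s : Stmt)
    (p : Valuation → ℝ) (hp : ∀ ε' : Valuation, 0 ≤ p ε' ∧ p ε' ≤ 1) (φ : Valuation → Prop) :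
    sat ε (.ite e (.seq s (.while e s)) .skip) p φ ↔ sat ε (.while e s) p φ := by
  set τ : State := (ε, if e ε then .seq s (.while e s) else .skip) with hτ
  have key : expectation (ε, .ite e (.seq s (.while e s)) .skip) (char φ)
      = expectation (ε, .while e s) (char φ) := by
    unfold expectation
    congr 1
    funext π
    have h1 : expVal π (ε, Stmt.ite e (.seq s (.while e s)) .skip) (char φ)
        = expVal π τ (char φ) := by
      refine expVal_det τ (fun p σ' h => step_ite_inv h) (by simp) ?_ (char φ)
      by_cases he : e ε = true
      · rw [hτ, if_pos he]; exact .iteT he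
      · rw [hτ, if_neg he]; exact .iteF (by simpa using he)
    have h2 : expVal π (ε, Stmt.while e s) (char φ) = expVal π τ (char φ) := by
      refine expVal_det τ (fun p σ' h => step_while_inv h) (by simp) ?_ (char φ)
      by_cases he : e ε = true
      · rw [hτ, if_pos he]; exact .whileT he
      · rw [hτ, if_neg he]; exact .whileF (by simpa using he)
    rw [h1, h2]
  unfold sat
  rw [key]

end PDL
end

section
/- (Soundness of the DemonChoice rule) For every valuation ε, pGCL programs s1, s2, and s, expectation lower bounds p1, p2, and p, and pDL state formula φ: if ε ⊨ [s1; s]_{p1} φ, ε ⊨ [s2; s]_{p2} φ, and p ≤ min(p1, p2) (pointwise), then ε ⊨ [(s1 ⊓ s2); s]_p φ. -/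
namespace PDL

lemma Step.prob_nonneg {π : Policy} {σ σ' : State} {q : ℝ} (h : Step π σ q σ') : 0 ≤ q := by
  induction h with
  | assign => norm_num
  | seqSkip _ ih => exact ih
  | seqStep _ ih => exact ih
  | demonL _ => norm_num
  | demonR _ => norm_num
  | iteT _ => norm_num
  | iteF _ => norm_num
  | probL h0 _ => exact h0
  | probR _ h1 => linarith
  | whileT _ => norm_num
  | whileF _ => norm_num

lemma Paths.prob_nonneg {π : Policy} : ∀ {σ : State} (ρ : Paths π σ), 0 ≤ ρ.prob
  | _, .nil _ => by simp [Paths.prob]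
  | _, .cons p h rest => by
      simpa [Paths.prob] using mul_nonneg h.prob_nonneg rest.prob_nonneg

lemma char_nonneg (φ : Valuation → Prop) (ε : Valuation) : 0 ≤ char φ ε := by
  unfold char; split <;> norm_num

lemma expVal_nonneg (π : Policy) (σ : State) (φ : Valuation → Prop) :
    0 ≤ expVal π σ (char φ) :=
  tsum_nonneg fun ρ => mul_nonneg ρ.prob_nonneg (char_nonneg φ _)

lemma demon_step_inv {π : Policy} {ε : Valuation} {s₁ s₂ s : Stmt} {q : ℝ} {σ' : State}
    (h : Step π (ε, Stmt.seq (Stmt.demon s₁ s₂) s) q σ') :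
    q = 1 ∧ σ' = (ε, Stmt.seq (if π (ε, .demon s₁ s₂) then s₁ else s₂) s) := by
  cases h with
  | seqStep h' =>
    cases h' with
    | demonL hb => simp [hb]
    | demonR hb => simp [hb]

lemma expVal_demon_seq (π : Policy) (ε : Valuation) (s₁ s₂ s : Stmt) (r : Valuation → ℝ) :
    expVal π (ε, .seq (.demon s₁ s₂) s) r
      = expVal π (ε, .seq (if π (ε, .demon s₁ s₂) then s₁ else s₂) s) r := by
  have hstep : Step π (ε, .seq (.demon s₁ s₂) s) 1
      (ε, .seq (if π (ε, .demon s₁ s₂) then s₁ else s₂) s) := by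
    by_cases hb : π (ε, .demon s₁ s₂) = true
    · simpa [hb] using Step.seqStep (s₂ := s) (Step.demonL hb)
    · simp only [Bool.not_eq_true] at hb
      simpa [hb] using Step.seqStep (s₂ := s) (Step.demonR hb)
  set t : Stmt := if π (ε, .demon s₁ s₂) then s₁ else s₂ with ht
  let g : Paths π (ε, .seq t s) → Paths π (ε, .seq (.demon s₁ s₂) s) :=
    fun ρ => .cons 1 hstep ρ
  have hg_inj : Function.Injective g := by
    intro a b hab
    simpa [g] using hab
  have hg_surj : Function.Surjective g := by
    intro ρ
    cases ρ with
    | cons q h rest =>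
      obtain ⟨hq, hσ⟩ := demon_step_inv h
      subst hq
      rw [← ht] at hσ
      subst hσ
      exact ⟨rest, rfl⟩
  have key := (Equiv.ofBijective g ⟨hg_inj, hg_surj⟩).tsum_eq
    (fun ρ : Paths π (ε, .seq (.demon s₁ s₂) s) => ρ.prob * r ρ.finalVal)
  rw [expVal, expVal, ← key]
  exact tsum_congr fun c => by
    simp [Equiv.ofBijective, g, Paths.prob, Paths.finalVal]

/-- (Soundness of the DemonChoice rule) if `ε ⊨ [s₁; s]_{p₁} φ`, `ε ⊨ [s₂; s]_{p₂} φ` and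
    `p ≤ min(p₁, p₂)` pointwise, then `ε ⊨ [(s₁ ⊓ s₂); s]_p φ`. -/
theorem demon_choice_rule_sound (ε : Valuation) (s₁ s₂ s : Stmt)
    (p₁ p₂ p : Valuation → ℝ)
    (hp₁ : ∀ ε' : Valuation, 0 ≤ p₁ ε' ∧ p₁ ε' ≤ 1)
    (hp₂ : ∀ ε' : Valuation, 0 ≤ p₂ ε' ∧ p₂ ε' ≤ 1)
    (hp : ∀ ε' : Valuation, 0 ≤ p ε' ∧ p ε' ≤ 1) (φ : Valuation → Prop)
    (h₁ : sat ε (.seq s₁ s) p₁ φ) (h₂ : sat ε (.seq s₂ s) p₂ φ)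
    (hle : ∀ ε' : Valuation, p ε' ≤ min (p₁ ε') (p₂ ε')) :
    sat ε (.seq (.demon s₁ s₂) s) p φ := by
  unfold sat expectation at *
  have hbdd : ∀ t : Stmt, BddBelow (Set.range fun π : Policy => expVal π (ε, t) (char φ)) :=
    fun t => ⟨0, by rintro x ⟨π, rfl⟩; exact expVal_nonneg π _ φ⟩
  refine le_ciInf fun π => ?_
  rw [expVal_demon_seq π ε s₁ s₂ s (char φ)]
  by_cases hb : π (ε, .demon s₁ s₂) = true
  · rw [hb]
    simp only [if_true]
    calc p ε ≤ p₁ ε := (hle ε).trans (min_le_left _ _)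
      _ ≤ ⨅ π' : Policy, expVal π' (ε, .seq s₁ s) (char φ) := h₁
      _ ≤ expVal π (ε, .seq s₁ s) (char φ) := ciInf_le (hbdd _) π
  · simp only [Bool.not_eq_true] at hb
    rw [hb]
    simp only [Bool.false_eq_true, if_false]
    calc p ε ≤ p₂ ε := (hle ε).trans (min_le_right _ _)
      _ ≤ ⨅ π' : Policy, expVal π' (ε, .seq s₂ s) (char φ) := h₂
      _ ≤ expVal π (ε, .seq s₂ s) (char φ) := ciInf_le (hbdd _) π

end PDL
end
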